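/- For all integers n ≥ 0, the number of 11-colored overpartitions satisfies p̄_{-11}(8n+1) ≡ 0 (mod 2) and p̄_{-11}(8n+4) ≡ 0 (mod 2). -/

import Mathlib

/-- The number of `t`-colored overpartitions of `n`, i.e. the `n`-th coefficient of the
formal power series `∏_{k≥1} (1-q^{2k})^t / (1-q^k)^{2t}` over `ℤ`.  Since every factor
with index `k > n` is `≡ 1 (mod q^{n+1})`, the `n`-th coefficient of the infinite product
equals the `n`-th coefficient of the product over `1 ≤ k ≤ n`, which is used here. -/
noncomputable def pbar (t n : ℕ) : ℤ :=
  PowerSeries.coeff (R := ℤ) n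
    ((∏ k ∈ Finset.Icc 1 n, (1 - PowerSeries.X ^ (2 * k)) ^ t) *
      PowerSeries.invOfUnit (∏ k ∈ Finset.Icc 1 n, (1 - PowerSeries.X ^ k) ^ (2 * t)) 1)

open PowerSeries Finset

lemma two_eq_zero_ps : (2 : PowerSeries (ZMod 2)) = 0 := by
  have h : (2 : PowerSeries (ZMod 2)) = PowerSeries.C (R := ZMod 2) 2 := by
    simp [map_ofNat]
  rw [h, show (2 : ZMod 2) = 0 from rfl, map_zero]

lemma neg_eq_self_ps (y : PowerSeries (ZMod 2)) : -y = y := by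
  rw [neg_eq_iff_add_eq_zero, ← two_mul, two_eq_zero_ps, zero_mul]

lemma sq_lemma (k : ℕ) :
    ((1 : PowerSeries (ZMod 2)) - X ^ k) ^ 2 = 1 - X ^ (2 * k) := by
  have h2 : (X : PowerSeries (ZMod 2)) ^ (2 * k) = (X ^ k) ^ 2 := by
    rw [← pow_mul, Nat.mul_comm]
  have h : ((1 : PowerSeries (ZMod 2)) - X ^ k) ^ 2 = 1 + X ^ (2 * k) := by
    rw [sub_sq, two_eq_zero_ps, h2]; ring
  rw [h, sub_eq_add_neg, neg_eq_self_ps]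

lemma pbar11_even (m : ℕ) (hm : 1 ≤ m) : ((pbar 11 m : ℤ) : ZMod 2) = 0 := by
  classical
  set A : PowerSeries ℤ := ∏ k ∈ Finset.Icc 1 m, (1 - X ^ (2 * k)) ^ 11 with hA
  set B : PowerSeries ℤ := ∏ k ∈ Finset.Icc 1 m, (1 - X ^ k) ^ (2 * 11) with hB
  have hcB : constantCoeff B = 1 := by
    rw [hB, map_prod]
    refine Finset.prod_eq_one fun k hk => ?_
    have hk1 : k ≠ 0 := by
      have := (Finset.mem_Icc.mp hk).1; omega
    rw [map_pow, map_sub, map_one, map_pow, constantCoeff_X, zero_pow hk1,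
      sub_zero, one_pow]
  have hmul : B * invOfUnit B 1 = 1 := mul_invOfUnit B 1 (by rw [hcB]; rfl)
  set φ : PowerSeries ℤ →+* PowerSeries (ZMod 2) :=
    PowerSeries.map (Int.castRingHom (ZMod 2)) with hφ
  have hAB : φ A = φ B := by
    rw [hA, hB, map_prod, map_prod]
    refine Finset.prod_congr rfl fun k _ => ?_
    rw [map_pow, map_pow, map_sub, map_sub, map_one, map_pow, map_pow,
      PowerSeries.map_X, ← sq_lemma, ← pow_mul]
  have hone : φ (A * invOfUnit B 1) = 1 := by
    rw [map_mul, hAB, ← map_mul, hmul, map_one]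
  have hcoeff : (PowerSeries.coeff (R := ZMod 2) m) (φ (A * invOfUnit B 1)) =
      ((pbar 11 m : ℤ) : ZMod 2) := by
    rw [hφ, PowerSeries.coeff_map]
    rfl
  rw [← hcoeff, hone, PowerSeries.coeff_one, if_neg (by omega)]

theorem pbar11_8n1_8n4_mod2 (n : ℕ) :
    pbar 11 (8 * n + 1) ≡ 0 [ZMOD 2] ∧ pbar 11 (8 * n + 4) ≡ 0 [ZMOD 2] := by
  constructor <;>
  · rw [Int.modEq_zero_iff_dvd]
    exact_mod_cast (ZMod.intCast_zmod_eq_zero_iff_dvd _ 2).mp (pbar11_even _ (by omega))
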